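/- Let H, K₁, K₂ be real Hilbert spaces, let A : H → K₁ and B : H → K₂ be continuous linear maps, let ε > 0, δ ≥ 0, and let M be a closed linear subspace of H. Let f*, f^δ ∈ K₂ satisfy ‖f^δ − f*‖ ≤ δ. Suppose u* ∈ M satisfies A u* = 0 and B u* = f* (the exact solution), and suppose u_δ ∈ M minimizes J_δ(u) = ‖A u‖² + ‖B u − f^δ‖² + ε‖u‖² over M. Then, with h = u_δ − u*, the following stability estimate holds: ‖A h‖² + (1/2)·‖B h‖² + (ε/2)·‖h‖² ≤ (1/2)·δ² + (ε/2)·‖u*‖². -/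

import Mathlib

/-!
Since `J` is quadratic, `J(u_δ + t h) = J(u_δ) + t J'(u_δ) h + t² J₀(h)`, with `J₀` the functional for
zero data. Minimality over `M` forces `J'(u_δ) h = 0` for `h ∈ M`. For `h = u_δ - u*` this reads
`J₀(h) = ⟨f^δ - f*, B h⟩ - ε ⟨u*, h⟩` because `A u* = 0` and `B u* = f*`, and Young's inequality on both
inner products gives the estimate.
-/

open RealInnerProductSpace

section InnerProduct

variable {F : Type*} [NormedAddCommGroup F] [InnerProductSpace ℝ F]

theorem real_inner_le_half_norm_sq_add (x y : F) :
    ⟪x, y⟫ ≤ (1 / 2) * ‖x‖ ^ 2 + (1 / 2) * ‖y‖ ^ 2 := by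
  nlinarith [real_inner_le_norm x y, two_mul_le_add_sq ‖x‖ ‖y‖]

theorem norm_add_smul_sq_real (x y : F) (t : ℝ) :
    ‖x + t • y‖ ^ 2 = ‖x‖ ^ 2 + 2 * t * ⟪x, y⟫ + t ^ 2 * ‖y‖ ^ 2 := by
  rw [norm_add_sq_real, real_inner_smul_right, norm_smul, mul_pow, Real.norm_eq_abs, sq_abs]
  ring

end InnerProduct

section Tikhonov

variable {H K₁ K₂ : Type*}
    [NormedAddCommGroup H] [InnerProductSpace ℝ H]
    [NormedAddCommGroup K₁] [InnerProductSpace ℝ K₁]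
    [NormedAddCommGroup K₂] [InnerProductSpace ℝ K₂]

def tikhonov (A : H →L[ℝ] K₁) (B : H →L[ℝ] K₂) (ε : ℝ) (g : K₂) (u : H) : ℝ :=
  ‖A u‖ ^ 2 + ‖B u - g‖ ^ 2 + ε * ‖u‖ ^ 2

/-- Half the directional derivative of `tikhonov A B ε g` at `u` along `h`. -/
def tikhonovDeriv (A : H →L[ℝ] K₁) (B : H →L[ℝ] K₂) (ε : ℝ) (g : K₂) (u h : H) : ℝ :=
  ⟪A u, A h⟫ + ⟪B u - g, B h⟫ + ε * ⟪u, h⟫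

variable (A : H →L[ℝ] K₁) (B : H →L[ℝ] K₂) (ε : ℝ) (g : K₂)

theorem tikhonov_add_smul (u h : H) (t : ℝ) :
    tikhonov A B ε g (u + t • h) =
      tikhonov A B ε g u + 2 * t * tikhonovDeriv A B ε g u h + t ^ 2 * tikhonov A B ε 0 h := by
  have hB : B (u + t • h) - g = (B u - g) + t • B h := by
    rw [map_add, map_smul]
    abel
  unfold tikhonov tikhonovDeriv
  rw [hB, map_add, map_smul, sub_zero, norm_add_smul_sq_real, norm_add_smul_sq_real,
    norm_add_smul_sq_real]
  ring

theorem tikhonovDeriv_eq_zero_of_isMinOn {M : Submodule ℝ H} {u h : H}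
    (hu : u ∈ M) (hmin : IsMinOn (tikhonov A B ε g) M u) (hh : h ∈ M) :
    tikhonovDeriv A B ε g u h = 0 := by
  have hquad : ∀ t : ℝ,
      0 ≤ tikhonov A B ε 0 h * (t * t) + 2 * tikhonovDeriv A B ε g u h * t + 0 := by
    intro t
    have := hmin (M.add_mem hu (M.smul_mem t hh))
    simp only [Set.mem_ofPred_eq, tikhonov_add_smul] at this
    linarith
  have := discrim_le_zero hquad
  rw [discrim] at this
  nlinarith [sq_nonneg (tikhonovDeriv A B ε g u h)]

theorem tikhonovDeriv_add_left {v : H} (hA : A v = 0) (h : H) :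
    tikhonovDeriv A B ε g (h + v) h =
      tikhonov A B ε 0 h - ⟪g - B v, B h⟫ + ε * ⟪v, h⟫ := by
  have hBu : B (h + v) - g = B h - (g - B v) := by rw [map_add]; abel
  unfold tikhonovDeriv tikhonov
  rw [map_add, hA, add_zero, hBu, inner_sub_left, inner_add_left, real_inner_self_eq_norm_sq,
    real_inner_self_eq_norm_sq, real_inner_self_eq_norm_sq, sub_zero]
  ring

theorem tikhonov_stability {M : Submodule ℝ H} {u v : H} (hε : 0 ≤ ε) (hu : u ∈ M) (hv : v ∈ M)
    (hA : A v = 0) (hmin : IsMinOn (tikhonov A B ε g) M u) :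
    ‖A (u - v)‖ ^ 2 + (1 / 2) * ‖B (u - v)‖ ^ 2 + (ε / 2) * ‖u - v‖ ^ 2
      ≤ (1 / 2) * ‖g - B v‖ ^ 2 + (ε / 2) * ‖v‖ ^ 2 := by
  have hcrit := tikhonovDeriv_eq_zero_of_isMinOn A B ε g hu hmin (M.sub_mem hu hv)
  have hexpand := tikhonovDeriv_add_left A B ε g hA (u - v)
  rw [sub_add_cancel, hcrit] at hexpand
  have hdata := real_inner_le_half_norm_sq_add (g - B v) (B (u - v))
  have hreg := mul_le_mul_of_nonneg_left (real_inner_le_half_norm_sq_add (-v) (u - v)) hε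
  rw [inner_neg_left, norm_neg] at hreg
  unfold tikhonov at hexpand
  rw [sub_zero] at hexpand
  linarith

end Tikhonov

theorem stmt6_general
    {H K₁ K₂ : Type*}
    [NormedAddCommGroup H] [InnerProductSpace ℝ H]
    [NormedAddCommGroup K₁] [InnerProductSpace ℝ K₁]
    [NormedAddCommGroup K₂] [InnerProductSpace ℝ K₂]
    (A : H →L[ℝ] K₁) (B : H →L[ℝ] K₂) (ε δ : ℝ) (hε : 0 < ε)
    (M : Submodule ℝ H)
    (fstar fdel : K₂) (hnoise : ‖fdel - fstar‖ ≤ δ)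
    (Jδ : H → ℝ) (hJδ : ∀ u, Jδ u = ‖A u‖ ^ 2 + ‖B u - fdel‖ ^ 2 + ε * ‖u‖ ^ 2)
    (ustar : H) (hustar : ustar ∈ M) (hA : A ustar = 0) (hB : B ustar = fstar)
    (udel : H) (hudel : udel ∈ M) (hmin : ∀ v ∈ M, Jδ udel ≤ Jδ v) :
    ‖A (udel - ustar)‖ ^ 2 + (1 / 2) * ‖B (udel - ustar)‖ ^ 2
        + (ε / 2) * ‖udel - ustar‖ ^ 2
      ≤ (1 / 2) * δ ^ 2 + (ε / 2) * ‖ustar‖ ^ 2 := by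
  have hJ : Jδ = tikhonov A B ε fdel := funext hJδ
  subst hJ hB
  calc _ ≤ (1 / 2) * ‖fdel - B ustar‖ ^ 2 + (ε / 2) * ‖ustar‖ ^ 2 :=
        tikhonov_stability A B ε fdel hε.le hudel hustar hA hmin
    _ ≤ (1 / 2) * δ ^ 2 + (ε / 2) * ‖ustar‖ ^ 2 := by gcongr

theorem stmt6
    {H K₁ K₂ : Type*}
    [NormedAddCommGroup H] [InnerProductSpace ℝ H] [CompleteSpace H]
    [NormedAddCommGroup K₁] [InnerProductSpace ℝ K₁] [CompleteSpace K₁]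
    [NormedAddCommGroup K₂] [InnerProductSpace ℝ K₂] [CompleteSpace K₂]
    (A : H →L[ℝ] K₁) (B : H →L[ℝ] K₂) (ε δ : ℝ) (hε : 0 < ε) (hδ : 0 ≤ δ)
    (M : Submodule ℝ H) (hM : IsClosed (M : Set H))
    (fstar fdel : K₂) (hnoise : ‖fdel - fstar‖ ≤ δ)
    (Jδ : H → ℝ) (hJδ : ∀ u, Jδ u = ‖A u‖ ^ 2 + ‖B u - fdel‖ ^ 2 + ε * ‖u‖ ^ 2)
    (ustar : H) (hustar : ustar ∈ M) (hA : A ustar = 0) (hB : B ustar = fstar)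
    (udel : H) (hudel : udel ∈ M) (hmin : ∀ v ∈ M, Jδ udel ≤ Jδ v) :
    ‖A (udel - ustar)‖ ^ 2 + (1 / 2) * ‖B (udel - ustar)‖ ^ 2
        + (ε / 2) * ‖udel - ustar‖ ^ 2
      ≤ (1 / 2) * δ ^ 2 + (ε / 2) * ‖ustar‖ ^ 2 :=
  stmt6_general A B ε δ hε M fstar fdel hnoise Jδ hJδ ustar hustar hA hB udel hudel hmin
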